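/- Let G=(V,E) be a finite connected graph with m edges, let w_{0,e}>0 be initial weights, and fix a step size s with 0<s<1/2. Define iterates by w_e^{(0)}=w_{0,e} and w_e^{(j+1)} = w_e^{(j)} − s·κ_e^{(j)}·ρ_e^{(j)}, where ρ_e^{(j)} and κ_e^{(j)} denote the distance and Lin–Lu–Yau's Ricci curvature of the edge e computed from the weights w^{(j)} (the defining limits are assumed to exist at every step, and the curvature satisfies the bounds −(2/ρ_e)·max_{τ∈E} w_τ ≤ κ_e ≤ 2). Then every iterate is strictly positive (so the flow has a unique global solution) and for all j∈ℕ and all e∈E: (1−2s)^j·w_{0,e} ≤ w_e^{(j)} ≤ (1+2ms)^j·∑_{τ∈E} w_{0,τ}. -/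

import Mathlib

open Finset

section RicciDefs

variable {V : Type*}

/-- The sum of the weights of the edges of a walk. -/
noncomputable def walkWeight {G : SimpleGraph V} (w : Sym2 V → ℝ) {u v : V} (p : G.Walk u v) : ℝ :=
  (p.edges.map w).sum

/-- The weighted graph distance: infimum of total weight over walks joining `u` and `v`. -/
noncomputable def gdist (G : SimpleGraph V) (w : Sym2 V → ℝ) (u v : V) : ℝ :=
  sInf {x : ℝ | ∃ p : G.Walk u v, x = walkWeight w p}

/-- A choice of ordered endpoints of an unordered pair. -/
noncomputable def endpoints (e : Sym2 V) : V × V := Quot.out e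

/-- The weighted distance between the endpoints of an edge. -/
noncomputable def edist (G : SimpleGraph V) (w : Sym2 V → ℝ) (e : Sym2 V) : ℝ :=
  gdist G w (endpoints e).1 (endpoints e).2

/-- The `α`-lazy one-step random walk at `x`. -/
noncomputable def lazyWalk (G : SimpleGraph V) [Fintype V] [DecidableEq V] [DecidableRel G.Adj]
    (w : Sym2 V → ℝ) (α : ℝ) (x : V) : V → ℝ := fun z =>
  if z = x then α
  else if G.Adj x z then (1 - α) * w s(x, z) / ∑ u ∈ G.neighborFinset x, w s(x, u)
  else 0

/-- A probability measure on a finite vertex set. -/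
def IsProbMeasure [Fintype V] (μ : V → ℝ) : Prop :=
  (∀ x, 0 ≤ μ x) ∧ ∑ x, μ x = 1

/-- A coupling between two probability measures. -/
def IsCoupling [Fintype V] (μ₁ μ₂ : V → ℝ) (A : V → V → ℝ) : Prop :=
  (∀ u v, A u v ∈ Set.Icc (0 : ℝ) 1) ∧ (∀ u, ∑ x, A u x = μ₁ u) ∧ (∀ v, ∑ y, A y v = μ₂ v)

/-- The Wasserstein distance between two probability measures. -/
noncomputable def wasserstein [Fintype V] (G : SimpleGraph V) (w : Sym2 V → ℝ)
    (μ₁ μ₂ : V → ℝ) : ℝ :=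
  sInf {x : ℝ | ∃ A : V → V → ℝ, IsCoupling μ₁ μ₂ A ∧ x = ∑ u, ∑ v, A u v * gdist G w u v}

/-- Ollivier's `α`-Ricci curvature of an edge. -/
noncomputable def ollivier [Fintype V] [DecidableEq V] (G : SimpleGraph V) [DecidableRel G.Adj]
    (w : Sym2 V → ℝ) (α : ℝ) (e : Sym2 V) : ℝ :=
  1 - wasserstein G w (lazyWalk G w α (endpoints e).1) (lazyWalk G w α (endpoints e).2)
        / edist G w e

end RicciDefs

set_option linter.unusedSectionVars false

section Helpers
variable {V : Type*} [Fintype V] [DecidableEq V]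

lemma mk_endpoints (e : Sym2 V) : s((endpoints e).1, (endpoints e).2) = e := by
  show Quot.mk _ _ = e
  rw [Prod.mk.eta]
  exact Quot.out_eq e

lemma walkWeight_nonneg {G : SimpleGraph V} (w : Sym2 V → ℝ)
    (hw : ∀ e ∈ G.edgeSet, 0 ≤ w e) {u v : V} (p : G.Walk u v) : 0 ≤ walkWeight w p := by
  apply List.sum_nonneg
  intro x hx
  obtain ⟨e, he, rfl⟩ := List.mem_map.mp hx
  exact hw e (p.edges_subset_edgeSet he)

lemma walkWeight_ge {G : SimpleGraph V} (w : Sym2 V → ℝ)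
    (hwnn : ∀ e ∈ G.edgeSet, 0 ≤ w e) {c : ℝ} (hc : ∀ e ∈ G.edgeSet, c ≤ w e) (hc0 : 0 ≤ c)
    {u v : V} (huv : u ≠ v) (p : G.Walk u v) : c ≤ walkWeight w p := by
  cases p with
  | nil => exact absurd rfl huv
  | cons h q =>
    rename_i b
    have h1 : c ≤ w s(u, b) := hc _ h
    have h2 : 0 ≤ walkWeight w q := walkWeight_nonneg w hwnn q
    simp only [walkWeight, SimpleGraph.Walk.edges_cons, List.map_cons, List.sum_cons]
    calc c ≤ w s(u, b) + 0 := by linarith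
      _ ≤ _ := add_le_add le_rfl h2

lemma edist_pos_le (G : SimpleGraph V) [DecidableRel G.Adj] (w : Sym2 V → ℝ)
    (hw : ∀ e ∈ G.edgeFinset, 0 < w e) {e : Sym2 V} (he : e ∈ G.edgeFinset) :
    0 < edist G w e ∧ edist G w e ≤ w e := by
  set x := (endpoints e).1
  set y := (endpoints e).2
  have hadj : G.Adj x y := by
    rw [← SimpleGraph.mem_edgeSet, mk_endpoints e]
    exact SimpleGraph.mem_edgeFinset.mp he
  set c := G.edgeFinset.inf' ⟨e, he⟩ w with hc
  have hcpos : 0 < c := by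
    obtain ⟨τ, hτ, hτ2⟩ := G.edgeFinset.exists_mem_eq_inf' ⟨e, he⟩ w
    rw [hc, hτ2]; exact hw τ hτ
  have hwnn : ∀ τ ∈ G.edgeSet, 0 ≤ w τ := fun τ hτ =>
    (hw τ (SimpleGraph.mem_edgeFinset.mpr hτ)).le
  have hlow : ∀ z ∈ {z : ℝ | ∃ p : G.Walk x y, z = walkWeight w p}, c ≤ z := by
    rintro z ⟨p, rfl⟩
    exact walkWeight_ge w hwnn (fun τ hτ => Finset.inf'_le w (SimpleGraph.mem_edgeFinset.mpr hτ))
      hcpos.le hadj.ne p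
  have hne : (walkWeight w (SimpleGraph.Walk.cons hadj SimpleGraph.Walk.nil)) ∈
      {z : ℝ | ∃ p : G.Walk x y, z = walkWeight w p} := ⟨_, rfl⟩
  have hval : walkWeight w (SimpleGraph.Walk.cons hadj SimpleGraph.Walk.nil) = w e := by
    simp [walkWeight, mk_endpoints e]
    exact congrArg w (mk_endpoints e)
  constructor
  · exact lt_of_lt_of_le hcpos (le_csInf ⟨_, hne⟩ hlow)
  · calc edist G w e ≤ walkWeight w (SimpleGraph.Walk.cons hadj SimpleGraph.Walk.nil) :=
        csInf_le ⟨c, hlow⟩ hne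
      _ = w e := hval

end Helpers

/-- Theorem 2.1 (ii): bounds for the discrete Ricci curvature flow with Lin–Lu–Yau's curvature. -/
theorem lly_flow_bounds {V : Type*} [Fintype V] [DecidableEq V]
    (G : SimpleGraph V) [DecidableRel G.Adj] (hconn : G.Connected)
    (m : ℕ) (hm : G.edgeFinset.card = m)
    (s : ℝ) (hs0 : 0 < s) (hs1 : s < 1 / 2)
    (w : ℕ → Sym2 V → ℝ) (κ : ℕ → Sym2 V → ℝ)
    (hpos0 : ∀ e ∈ G.edgeFinset, 0 < w 0 e)
    -- the Lin–Lu–Yau curvature κ is the limit of κ^α/(1-α) as α → 1⁻, assumed to exist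
    (hLLY : ∀ j : ℕ, ∀ e ∈ G.edgeFinset,
      Filter.Tendsto (fun α : ℝ => ollivier G (w j) α e / (1 - α))
        (nhdsWithin 1 (Set.Iio 1)) (nhds (κ j e)))
    -- the curvature bounds −(2/ρ_e)·max_{τ∈E} w_τ ≤ κ_e ≤ 2
    (hbound : ∀ (j : ℕ) (e : Sym2 V) (he : e ∈ G.edgeFinset),
      -(2 / edist G (w j) e) * G.edgeFinset.sup' ⟨e, he⟩ (w j) ≤ κ j e ∧ κ j e ≤ 2)
    (hflow : ∀ j : ℕ, ∀ e ∈ G.edgeFinset,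
      w (j + 1) e = w j e - s * κ j e * edist G (w j) e) :
    ∀ j : ℕ, ∀ e ∈ G.edgeFinset,
      0 < w j e ∧
      (1 - 2 * s) ^ j * w 0 e ≤ w j e ∧
      w j e ≤ (1 + 2 * (m : ℝ) * s) ^ j * ∑ τ ∈ G.edgeFinset, w 0 τ := by
  suffices H : ∀ j : ℕ, (∀ e ∈ G.edgeFinset, 0 < w j e ∧ (1 - 2 * s) ^ j * w 0 e ≤ w j e) ∧
      ∑ τ ∈ G.edgeFinset, w j τ ≤ (1 + 2 * (m : ℝ) * s) ^ j * ∑ τ ∈ G.edgeFinset, w 0 τ by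
    intro j e he
    obtain ⟨h1, h2⟩ := H j
    refine ⟨(h1 e he).1, (h1 e he).2, ?_⟩
    calc w j e ≤ ∑ τ ∈ G.edgeFinset, w j τ :=
        Finset.single_le_sum (fun τ hτ => ((h1 τ hτ).1).le) he
      _ ≤ _ := h2
  intro j
  induction j with
  | zero =>
    refine ⟨fun e he => ⟨hpos0 e he, by simp⟩, by simp⟩
  | succ j ih =>
    obtain ⟨ih1, ih2⟩ := ih
    have hpos : ∀ e ∈ G.edgeFinset, 0 < w j e := fun e he => (ih1 e he).1
    set S := ∑ τ ∈ G.edgeFinset, w j τ with hS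
    have key : ∀ e ∈ G.edgeFinset, (1 - 2 * s) * w j e ≤ w (j + 1) e ∧
        w (j + 1) e ≤ w j e + 2 * s * S := by
      intro e he
      obtain ⟨hρ0, hρle⟩ := edist_pos_le G (w j) hpos he
      obtain ⟨hκl, hκu⟩ := hbound j e he
      set ρ := edist G (w j) e
      set M := G.edgeFinset.sup' ⟨e, he⟩ (w j) with hM
      have hMle : M ≤ S := by
        obtain ⟨τ, hτ, hτ2⟩ := G.edgeFinset.exists_mem_eq_sup' ⟨e, he⟩ (w j)
        rw [hM, hτ2]
        exact Finset.single_le_sum (fun τ' hτ' => (hpos τ' hτ').le) hτ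
      have hM0 : 0 < M := lt_of_lt_of_le (hpos e he) (Finset.le_sup' (w j) he)
      rw [hflow j e he]
      constructor
      · have h1 : s * κ j e * ρ ≤ s * 2 * ρ :=
          mul_le_mul_of_nonneg_right (mul_le_mul_of_nonneg_left hκu hs0.le) hρ0.le
        have h2 : s * 2 * ρ ≤ 2 * s * w j e := by nlinarith
        linarith
      · have h1 : -(2 / ρ) * M * ρ ≤ κ j e * ρ := mul_le_mul_of_nonneg_right hκl hρ0.le
        have h2 : -(2 / ρ) * M * ρ = -(2 * M) := by field_simp
        have h3 : -(2 * M) ≤ κ j e * ρ := h2 ▸ h1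
        have h4 : -(s * κ j e * ρ) ≤ s * (2 * M) := by nlinarith
        nlinarith
    refine ⟨fun e he => ?_, ?_⟩
    · obtain ⟨hl, _⟩ := key e he
      obtain ⟨hp, hlo⟩ := ih1 e he
      have h12 : 0 < 1 - 2 * s := by linarith
      constructor
      · exact lt_of_lt_of_le (by positivity) hl
      · calc (1 - 2 * s) ^ (j + 1) * w 0 e = (1 - 2 * s) * ((1 - 2 * s) ^ j * w 0 e) := by ring
          _ ≤ (1 - 2 * s) * w j e := mul_le_mul_of_nonneg_left hlo h12.le
          _ ≤ w (j + 1) e := hl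
    · have h1 : ∑ τ ∈ G.edgeFinset, w (j + 1) τ ≤ ∑ τ ∈ G.edgeFinset, (w j τ + 2 * s * S) :=
        Finset.sum_le_sum (fun τ hτ => (key τ hτ).2)
      have h2 : ∑ τ ∈ G.edgeFinset, (w j τ + 2 * s * S) = S + (m : ℝ) * (2 * s * S) := by
        rw [Finset.sum_add_distrib, Finset.sum_const, hm, nsmul_eq_mul, hS]
      have hSnn : 0 ≤ S := Finset.sum_nonneg (fun τ hτ => (hpos τ hτ).le)
      have hc : (0 : ℝ) ≤ 1 + 2 * (m : ℝ) * s := by positivity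
      calc ∑ τ ∈ G.edgeFinset, w (j + 1) τ ≤ (1 + 2 * (m : ℝ) * s) * S := by rw [h2] at h1; linarith
        _ ≤ (1 + 2 * (m : ℝ) * s) * ((1 + 2 * (m : ℝ) * s) ^ j * ∑ τ ∈ G.edgeFinset, w 0 τ) :=
          mul_le_mul_of_nonneg_left ih2 hc
        _ = (1 + 2 * (m : ℝ) * s) ^ (j + 1) * ∑ τ ∈ G.edgeFinset, w 0 τ := by ring
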